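/- Let G be an abelian group, let g ≥ 1 and m ≥ 1 be natural numbers, and let T be a subset of G. Suppose: (i) for every x ∈ G the set {η ∈ G : 2η = 0 and x + η ∈ T} has at most 4^g − 3^g elements; (ii) the 2m-torsion subgroup {a ∈ G : (2m)·a = 0} is finite of cardinality (2m)^(2g); (iii) the 2-torsion subgroup {a ∈ G : 2a = 0} has cardinality 2^(2g). Then the set {a ∈ G : (2m)·a = 0 and a ∈ T} has at most m^(2g) · (4^g − 3^g) elements. -/

import Mathlib

/-!
Double counting: the pairs `(x, η) ∈ G[2m] × G[2]` with `x + η ∈ T` number exactly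
`|G[2]| · |G[2m] ∩ T|`, since translation by `η ∈ G[2] ≤ G[2m]` permutes `G[2m]`; counted by `x`
instead, they number at most `|G[2m]| · (4^g − 3^g)`. Dividing by `|G[2]| = 2^(2g)` gives the bound.
-/

open Finset

namespace AddSubgroup

theorem card_mul_ncard_inter_le {G : Type*} [AddGroup G] {H K : AddSubgroup G} (hHK : H ≤ K)
    (hK : (K : Set G).Finite) (T : Set G) (c : ℕ)
    (hT : ∀ x ∈ K, {η ∈ H | x + η ∈ T}.ncard ≤ c) :
    Nat.card H * ((K : Set G) ∩ T).ncard ≤ Nat.card K * c := by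
  classical
  have hH : (H : Set G).Finite := hK.subset hHK
  rw [← SetLike.coe_sort_coe, ← SetLike.coe_sort_coe K, Nat.card_eq_card_finite_toFinset hH,
    Nat.card_eq_card_finite_toFinset hK]
  refine card_mul_le_card_mul (fun η x => x + η ∈ T) (fun η hη => ?_) (fun x hx => ?_)
  · rw [← Set.ncard_coe_finset, bipartiteAbove, coe_filter]
    refine Set.ncard_le_ncard_of_injOn (· - η) ?_ (fun _ _ _ _ h => sub_left_injective h)
      (Set.toFinite _)
    rintro a ⟨haK, haT⟩
    simp only [Set.Finite.mem_toFinset, SetLike.mem_coe] at hη ⊢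
    exact ⟨sub_mem haK (hHK hη), by simpa using haT⟩
  · rw [Set.Finite.mem_toFinset] at hx
    convert hT x hx using 1
    rw [← Set.ncard_coe_finset, bipartiteBelow, coe_filter]
    simp

theorem coe_torsionBy_natCast {A : Type*} [AddCommGroup A] (n : ℕ) :
    (torsionBy A n : Set A) = {a | n • a = 0} :=
  Set.ext fun _ => torsionBy.nsmul_iff

theorem torsionBy_le_torsionBy_of_dvd {A : Type*} [AddCommGroup A] {m n : ℕ} (h : m ∣ n) :
    torsionBy A m ≤ torsionBy A n := by
  obtain ⟨k, rfl⟩ := h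
  intro a ha
  rw [torsionBy.nsmul_iff] at ha ⊢
  rw [mul_nsmul, ha, nsmul_zero]

end AddSubgroup

theorem stmt1_general {G : Type*} [AddCommGroup G] (g m : ℕ)
    (T : Set G)
    (h2 : ∀ x : G, {η : G | 2 • η = 0 ∧ x + η ∈ T}.Finite ∧
      {η : G | 2 • η = 0 ∧ x + η ∈ T}.ncard ≤ 4 ^ g - 3 ^ g)
    (hfin : {a : G | (2 * m) • a = 0}.Finite)
    (hcard2m : {a : G | (2 * m) • a = 0}.ncard = (2 * m) ^ (2 * g))
    (hcard2 : {a : G | 2 • a = 0}.ncard = 2 ^ (2 * g)) :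
    {a : G | (2 * m) • a = 0 ∧ a ∈ T}.ncard ≤ m ^ (2 * g) * (4 ^ g - 3 ^ g) := by
  have key := AddSubgroup.card_mul_ncard_inter_le
    (AddSubgroup.torsionBy_le_torsionBy_of_dvd (A := G) (dvd_mul_right 2 m))
    (by rwa [AddSubgroup.coe_torsionBy_natCast]) T (4 ^ g - 3 ^ g) fun x _ => by
      simpa only [AddSubgroup.torsionBy.nsmul_iff] using (h2 x).2
  rw [← SetLike.coe_sort_coe, ← SetLike.coe_sort_coe (AddSubgroup.torsionBy G _),
    Nat.card_coe_set_eq, Nat.card_coe_set_eq, AddSubgroup.coe_torsionBy_natCast,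
    AddSubgroup.coe_torsionBy_natCast, hcard2, hcard2m, mul_pow, mul_assoc] at key
  exact Nat.le_of_mul_le_mul_left key (by positivity)

/-- Group-theoretic content of Corollary 4.2 of the paper:
`Θ(2m) ≤ m^(2g) · (4^g − 3^g)`. -/
theorem stmt1 {G : Type*} [AddCommGroup G] (g m : ℕ) (hg : 1 ≤ g) (hm : 1 ≤ m)
    (T : Set G)
    (h2 : ∀ x : G, {η : G | 2 • η = 0 ∧ x + η ∈ T}.Finite ∧
      {η : G | 2 • η = 0 ∧ x + η ∈ T}.ncard ≤ 4 ^ g - 3 ^ g)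
    (hfin : {a : G | (2 * m) • a = 0}.Finite)
    (hcard2m : {a : G | (2 * m) • a = 0}.ncard = (2 * m) ^ (2 * g))
    (hcard2 : {a : G | 2 • a = 0}.ncard = 2 ^ (2 * g)) :
    {a : G | (2 * m) • a = 0 ∧ a ∈ T}.ncard ≤ m ^ (2 * g) * (4 ^ g - 3 ^ g) :=
  stmt1_general g m T h2 hfin hcard2m hcard2
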